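/- The 12×12 integer matrix M (the action of t_{α_0}* on Pic for n=4, m=11, given explicitly in the paper with first row (28,9,9,1,1,1,4,4,4,4,4,4) etc.) satisfies (M - I)³ = 0 and (M - I)² ≠ 0; consequently the entries of M^l grow at most quadratically in l. -/

import Mathlib

/-!
Write `M = 1 + N`. Since `N ^ 3 = 0`, the binomial expansion of `(1 + N) ^ l` stops after
the quadratic term: `M ^ l = 1 + l • N + (l choose 2) • N ^ 2`, so every entry of `M ^ l` is
bounded by a constant times `l ^ 2 + 1`. That `N ^ 2 ≠ 0` is seen on its `(0, 0)` entry, `54`.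
-/

/-- The action of t_{α₀}* on Pic for n = 4, m = 11 (the explicit 12×12 matrix). -/
def M : Matrix (Fin 12) (Fin 12) ℤ :=
  !![28, 9, 9, 1, 1, 1, 4, 4, 4, 4, 4, 4;
     -27, -8, -9, -1, -1, -1, -4, -4, -4, -4, -4, -4;
     -27, -9, -8, -1, -1, -1, -4, -4, -4, -4, -4, -4;
     -15, -5, -5, 0, -1, -1, -2, -2, -2, -2, -2, -2;
     -15, -5, -5, -1, 0, -1, -2, -2, -2, -2, -2, -2;
     -15, -5, -5, -1, -1, 0, -2, -2, -2, -2, -2, -2;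
     -6, -2, -2, 0, 0, 0, 0, -1, -1, -1, -1, -1;
     -6, -2, -2, 0, 0, 0, -1, 0, -1, -1, -1, -1;
     -6, -2, -2, 0, 0, 0, -1, -1, 0, -1, -1, -1;
     -6, -2, -2, 0, 0, 0, -1, -1, -1, 0, -1, -1;
     -6, -2, -2, 0, 0, 0, -1, -1, -1, -1, 0, -1;
     -6, -2, -2, 0, 0, 0, -1, -1, -1, -1, -1, 0]

theorem one_add_pow_eq_of_pow_three_eq_zero {R : Type*} [Ring R] {N : R} (hN : N ^ 3 = 0)
    (l : ℕ) : (1 + N) ^ l = 1 + l • N + l.choose 2 • N ^ 2 := by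
  induction l with
  | zero => simp
  | succ l ih =>
    calc (1 + N) ^ (l + 1) = (1 + l • N + l.choose 2 • N ^ 2) * (1 + N) := by rw [pow_succ, ih]
      _ = 1 + (l + 1) • N + (l + l.choose 2) • N ^ 2 + l.choose 2 • N ^ 3 := by
        simp only [mul_add, add_mul, one_mul, mul_one, smul_mul_assoc, add_smul, one_smul,
          ← pow_succ, ← pow_two]
        abel
      _ = 1 + (l + 1) • N + (l + 1).choose 2 • N ^ 2 := by
        rw [hN, smul_zero, add_zero, Nat.choose_succ_succ, Nat.choose_one_right]

section OrderedRing

variable {R : Type*} [CommRing R] [LinearOrder R] [IsStrictOrderedRing R]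

theorem abs_add_nat_mul_add_choose_two_mul_le (x y z : R) (l : ℕ) :
    |x + l * y + l.choose 2 * z| ≤ (|x| + |y| + |z|) * ((l : R) ^ 2 + 1) := by
  have hl : (l : R) ≤ (l : R) ^ 2 + 1 := by nlinarith [sq_nonneg ((l : R) - 1)]
  have hc : (l.choose 2 : R) ≤ (l : R) ^ 2 := by exact_mod_cast Nat.choose_le_pow l 2
  calc |x + l * y + l.choose 2 * z|
      ≤ |x| + l * |y| + l.choose 2 * |z| := by
        refine (abs_add_le _ _).trans (add_le_add ((abs_add_le _ _).trans ?_) ?_) <;>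
          simp [abs_mul]
    _ ≤ |x| * ((l : R) ^ 2 + 1) + |y| * ((l : R) ^ 2 + 1) + |z| * ((l : R) ^ 2 + 1) := by
        nlinarith [abs_nonneg x, abs_nonneg y, abs_nonneg z, sq_nonneg (l : R)]
    _ = (|x| + |y| + |z|) * ((l : R) ^ 2 + 1) := by ring

theorem Matrix.exists_abs_apply_le {m n : Type*} [Finite m] [Finite n] (A : Matrix m n R) :
    ∃ B : R, ∀ i j, |A i j| ≤ B := by
  obtain ⟨B, hB⟩ := (Set.finite_range fun p : m × n => |A p.1 p.2|).bddAbove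
  exact ⟨B, fun i j => hB ⟨(i, j), rfl⟩⟩

theorem Matrix.exists_abs_pow_apply_le_of_sub_one_pow_three_eq_zero {n : Type*} [Fintype n]
    [DecidableEq n] {A : Matrix n n R} (hA : (A - 1) ^ 3 = 0) :
    ∃ C : R, ∀ (l : ℕ) (i j : n), |(A ^ l) i j| ≤ C * ((l : R) ^ 2 + 1) := by
  obtain ⟨B₀, hB₀⟩ := (1 : Matrix n n R).exists_abs_apply_le
  obtain ⟨B₁, hB₁⟩ := (A - 1).exists_abs_apply_le
  obtain ⟨B₂, hB₂⟩ := ((A - 1) ^ 2 : Matrix n n R).exists_abs_apply_le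
  refine ⟨B₀ + B₁ + B₂, fun l i j => ?_⟩
  have hpow : A ^ l = 1 + l • (A - 1) + l.choose 2 • (A - 1) ^ 2 := by
    simpa using one_add_pow_eq_of_pow_three_eq_zero hA l
  rw [hpow]
  simp only [Matrix.add_apply, Matrix.smul_apply]
  simp only [nsmul_eq_mul]
  refine (abs_add_nat_mul_add_choose_two_mul_le _ _ _ l).trans ?_
  gcongr
  exacts [hB₀ i j, hB₁ i j, hB₂ i j]

end OrderedRing

theorem M_sub_one_pow_three : (M - 1) ^ 3 = 0 := by decide

theorem M_sub_one_sq_apply_zero_zero :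
    ((M - 1) ^ 2 : Matrix (Fin 12) (Fin 12) ℤ) 0 0 = 54 := by
  decide

/-- M is unipotent with (M - I)³ = 0 and (M - I)² ≠ 0; consequently the entries of
M^l grow at most quadratically in l. -/
theorem stmt12 :
    (M - 1) ^ 3 = 0 ∧ (M - 1) ^ 2 ≠ 0 ∧
    ∃ C : ℤ, ∀ (l : ℕ) (i j : Fin 12), |(M ^ l) i j| ≤ C * ((l : ℤ) ^ 2 + 1) := by
  refine ⟨M_sub_one_pow_three, fun h => ?_,
    Matrix.exists_abs_pow_apply_le_of_sub_one_pow_three_eq_zero M_sub_one_pow_three⟩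
  have h54 := M_sub_one_sq_apply_zero_zero
  rw [h] at h54
  simp at h54
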